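/- The group G = F_2^{n-1} ⋊_φ D_{2n} is generated by the three elements ρ_0 = (0,h_0), ρ_1 = (0,h_1), and ρ_2 = ((0,...,0,1)^T, h_0). -/

import Mathlib

/-!
The reflections `h₀ = sr 0` and `h₁ = sr 1` generate `D_{2n}` (their product is the
rotation `r 1`), so the subgroup `H` generated by the `ρᵢ` contains the complement `D_{2n}`.
Hence the vectors `w` with `(w, 1) ∈ H` form a `U`- and `V`-stable subgroup of `F₂^{n-1}`,
which contains `u = ρ₂ ρ₀`. As `V e_j = e_{n-2-j}` and `U e_j = u + e_{n-3-j}`, starting from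
`e_{n-2} = u` one reaches every standard basis vector, so `H` also contains `F₂^{n-1}`.
-/

open Matrix DihedralGroup

/-- The matrix `U` of Lemma 3: (0-indexed) row `i` has a 1 at column `n-3-i` for
`i ≤ n-3`, and the last row is all ones. -/
def Umat (n : ℕ) : Matrix (Fin (n-1)) (Fin (n-1)) (ZMod 2) :=
  Matrix.of fun i j =>
    if (i : ℕ) = n - 2 then 1 else if (i : ℕ) + (j : ℕ) = n - 3 then 1 else 0

/-- The anti-diagonal permutation matrix `V` of Lemma 3. -/
def Vmat (n : ℕ) : Matrix (Fin (n-1)) (Fin (n-1)) (ZMod 2) :=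
  Matrix.of fun i j => if (i : ℕ) + (j : ℕ) = n - 2 then 1 else 0

/-- u = (0,…,0,1)ᵀ ∈ F₂^{n-1}. -/
def uVec (n : ℕ) : Fin (n-1) → ZMod 2 := fun i => if (i : ℕ) = n - 2 then 1 else 0

/-- v = Vu = (1,0,…,0)ᵀ ∈ F₂^{n-1}. -/
def vVec (n : ℕ) : Fin (n-1) → ZMod 2 := fun i => if (i : ℕ) = 0 then 1 else 0

/-- The multiplicative group structure on `AddAut A` (composition), as in the older Mathlib. -/
instance AddAut.oldGroup (A : Type*) [Add A] : Group (AddAut A) where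
  mul g h := AddEquiv.trans h g
  one := AddEquiv.refl _
  inv := AddEquiv.symm
  mul_assoc _ _ _ := rfl
  one_mul _ := rfl
  mul_one _ := rfl
  inv_mul_cancel := AddEquiv.self_trans_symm

/-- The action of `D_{2n}` on `F₂^{n-1}` (written multiplicatively) induced by a
representation `φ : D_{2n} → Aut(F₂^{n-1})`. -/
def dihAct (n : ℕ) (φ : DihedralGroup n →* AddAut (Fin (n-1) → ZMod 2)) :
    DihedralGroup n →* MulAut (Multiplicative (Fin (n-1) → ZMod 2)) where
  toFun x := AddEquiv.toMultiplicative (φ x)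
  map_one' := by ext w; rw [map_one]; rfl
  map_mul' x y := by ext w; rw [map_mul]; rfl

/-- The semidirect product `G = F₂^{n-1} ⋊_φ D_{2n}`. -/
abbrev Gsd (n : ℕ) (φ : DihedralGroup n →* AddAut (Fin (n-1) → ZMod 2)) :=
  Multiplicative (Fin (n-1) → ZMod 2) ⋊[dihAct n φ] DihedralGroup n

/-- `ρ₀ = (0, h₀)`, where `h₀ = sr 0`. -/
def rho0 (n : ℕ) (φ : DihedralGroup n →* AddAut (Fin (n-1) → ZMod 2)) : Gsd n φ :=
  ⟨Multiplicative.ofAdd 0, sr 0⟩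

/-- `ρ₁ = (0, h₁)`, where `h₁ = sr 1`. -/
def rho1 (n : ℕ) (φ : DihedralGroup n →* AddAut (Fin (n-1) → ZMod 2)) : Gsd n φ :=
  ⟨Multiplicative.ofAdd 0, sr 1⟩

/-- `ρ₂ = (u, h₀)`, where `u = (0,…,0,1)ᵀ`. -/
def rho2 (n : ℕ) (φ : DihedralGroup n →* AddAut (Fin (n-1) → ZMod 2)) : Gsd n φ :=
  ⟨Multiplicative.ofAdd (uVec n), sr 0⟩

open SemidirectProduct

namespace DihedralGroup

theorem closure_sr_zero_sr_one (n : ℕ) : Subgroup.closure {sr (0 : ZMod n), sr 1} = ⊤ := by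
  set K := Subgroup.closure {sr (0 : ZMod n), sr 1}
  have h0 : sr (0 : ZMod n) ∈ K := Subgroup.subset_closure (by simp)
  have h1 : sr (1 : ZMod n) ∈ K := Subgroup.subset_closure (by simp)
  have hr : ∀ i : ZMod n, r i ∈ K := by
    have hr1 : r (1 : ZMod n) ∈ K := by simpa using mul_mem h0 h1
    intro i
    obtain ⟨k, rfl⟩ := ZMod.intCast_surjective i
    simpa using zpow_mem hr1 k
  refine eq_top_iff.2 fun x _ => ?_
  cases x with
  | r i => exact hr i
  | sr i => simpa using mul_mem h0 (hr i)

end DihedralGroup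

namespace SemidirectProduct

variable {N G : Type*} [Group N] [Group G] {φ : G →* MulAut N} {H : Subgroup (N ⋊[φ] G)}

theorem eq_top_of_comap_inl_eq_top_of_comap_inr_eq_top (hN : H.comap inl = ⊤)
    (hG : H.comap inr = ⊤) : H = ⊤ := by
  refine eq_top_iff.2 fun x _ => inl_left_mul_inr_right x ▸ mul_mem ?_ ?_
  · exact (hN ▸ Subgroup.mem_top x.left : x.left ∈ H.comap inl)
  · exact (hG ▸ Subgroup.mem_top x.right : x.right ∈ H.comap inr)

theorem inl_aut_mem {g : G} {x : N} (hg : inr g ∈ H) (hx : inl x ∈ H) : inl (φ g x) ∈ H := by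
  rw [inl_aut, map_inv]
  exact mul_mem (mul_mem hg hx) (inv_mem hg)

end SemidirectProduct

theorem AddSubgroup.eq_top_of_forall_single_one_mem {ι : Type*} [Finite ι] [DecidableEq ι]
    {p : ℕ} (M : AddSubgroup (ι → ZMod p)) (h : ∀ i, Pi.single i 1 ∈ M) : M = ⊤ := by
  have : (⊤ : Submodule (ZMod p) (ι → ZMod p)) ≤ AddSubgroup.toZModSubmodule p M := by
    rw [← (Pi.basisFun (ZMod p) ι).span_eq, Submodule.span_le]
    rintro _ ⟨i, rfl⟩
    simpa using h i
  exact eq_top_iff.2 fun w _ => this trivial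

section

variable {n : ℕ}

theorem uVec_eq_single {i : Fin (n-1)} (h : (i : ℕ) + 2 = n) : uVec n = Pi.single i 1 := by
  ext k
  simp only [uVec, Pi.single_apply, Fin.ext_iff]
  split_ifs <;> first | rfl | omega

theorem Vmat_mulVec_single {i j : Fin (n-1)} (h : (i : ℕ) + j + 2 = n) :
    Vmat n *ᵥ Pi.single j 1 = Pi.single i 1 := by
  ext k
  simp only [mulVec_single_one, Vmat, col_apply, of_apply, Pi.single_apply, Fin.ext_iff]
  split_ifs <;> first | rfl | omega

theorem Umat_mulVec_single {i j : Fin (n-1)} (h : (i : ℕ) + j + 3 = n) :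
    Umat n *ᵥ Pi.single j 1 = uVec n + Pi.single i 1 := by
  ext k
  simp only [mulVec_single_one, Umat, uVec, col_apply, of_apply, Pi.add_apply,
    Pi.single_apply, Fin.ext_iff]
  split_ifs <;> first | rfl | omega

theorem single_mem_of_uVec_mem {M : AddSubgroup (Fin (n-1) → ZMod 2)} (hu : uVec n ∈ M)
    (hU : ∀ w ∈ M, Umat n *ᵥ w ∈ M) (hV : ∀ w ∈ M, Vmat n *ᵥ w ∈ M)
    (j : Fin (n-1)) : Pi.single j 1 ∈ M := by
  suffices ∀ k (j : Fin (n-1)), (j : ℕ) + k + 2 = n → Pi.single j 1 ∈ M from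
    this (n - 2 - j) j (by omega)
  intro k
  induction k with
  | zero => intro j hj; exact uVec_eq_single hj ▸ hu
  | succ k ih =>
    intro j hj
    let k' : Fin (n-1) := ⟨k, by omega⟩
    have hk : Pi.single k' 1 ∈ M :=
      Vmat_mulVec_single (i := k') (j := ⟨n - 2 - k, by omega⟩) (by simp [k']; omega) ▸
        hV _ (ih _ (by simp; omega))
    simpa [Umat_mulVec_single (i := j) (j := k') (by simp [k']; omega)] using
      sub_mem (hU _ hk) hu

theorem eq_top_of_uVec_mem {M : AddSubgroup (Fin (n-1) → ZMod 2)} (hu : uVec n ∈ M)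
    (hU : ∀ w ∈ M, Umat n *ᵥ w ∈ M) (hV : ∀ w ∈ M, Vmat n *ᵥ w ∈ M) : M = ⊤ :=
  M.eq_top_of_forall_single_one_mem (single_mem_of_uVec_mem hu hU hV)

end

theorem rho0_eq_inr (n : ℕ) (φ : DihedralGroup n →* AddAut (Fin (n-1) → ZMod 2)) :
    rho0 n φ = inr (sr 0) := by
  ext <;> simp [rho0]

theorem rho1_eq_inr (n : ℕ) (φ : DihedralGroup n →* AddAut (Fin (n-1) → ZMod 2)) :
    rho1 n φ = inr (sr 1) := by
  ext <;> simp [rho1]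

theorem rho2_mul_rho0 (n : ℕ) (φ : DihedralGroup n →* AddAut (Fin (n-1) → ZMod 2)) :
    rho2 n φ * rho0 n φ = inl (Multiplicative.ofAdd (uVec n)) := by
  ext <;> simp [rho2, rho0]

theorem stmt_13_general (n : ℕ)
    (φ : DihedralGroup n →* AddAut (Fin (n-1) → ZMod 2))
    (hφ0 : ∀ w, φ (sr 0) w = (Umat n).mulVec w)
    (hφ1 : ∀ w, φ (sr 1) w = (Vmat n).mulVec w) :
    Subgroup.closure {rho0 n φ, rho1 n φ, rho2 n φ} = (⊤ : Subgroup (Gsd n φ)) := by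
  set H := Subgroup.closure {rho0 n φ, rho1 n φ, rho2 n φ}
  have h0 : rho0 n φ ∈ H := Subgroup.subset_closure (by simp)
  have h1 : rho1 n φ ∈ H := Subgroup.subset_closure (by simp)
  have h2 : rho2 n φ ∈ H := Subgroup.subset_closure (by simp)
  have hinr : H.comap inr = ⊤ := by
    rw [eq_top_iff, ← closure_sr_zero_sr_one, Subgroup.closure_le]
    rintro _ (rfl | rfl)
    exacts [Subgroup.mem_comap.2 (rho0_eq_inr n φ ▸ h0),
      Subgroup.mem_comap.2 (rho1_eq_inr n φ ▸ h1)]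
  have hact : ∀ x w,
      inl (Multiplicative.ofAdd w) ∈ H → inl (Multiplicative.ofAdd (φ x w)) ∈ H :=
    fun x _ => inl_aut_mem (φ := dihAct n φ) (hinr ▸ Subgroup.mem_top x : x ∈ H.comap inr)
  have hinl : (H.comap inl).toAddSubgroup' = ⊤ := by
    refine eq_top_of_uVec_mem ?_ ?_ ?_
    · simpa [rho2_mul_rho0] using mul_mem h2 h0
    · intro w hw; simpa [← hφ0] using hact _ w hw
    · intro w hw; simpa [← hφ1] using hact _ w hw
  exact eq_top_of_comap_inl_eq_top_of_comap_inr_eq_top (by simpa using hinl) hinr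

/-- G = F2^{n-1} ⋊_φ D_{2n} is generated by ρ0, ρ1, ρ2. -/
theorem stmt_13 (n : ℕ) (hn : 3 ≤ n)
    (φ : DihedralGroup n →* AddAut (Fin (n-1) → ZMod 2))
    (hφ0 : ∀ w, φ (sr 0) w = (Umat n).mulVec w)
    (hφ1 : ∀ w, φ (sr 1) w = (Vmat n).mulVec w) :
    Subgroup.closure {rho0 n φ, rho1 n φ, rho2 n φ} = (⊤ : Subgroup (Gsd n φ)) :=
  stmt_13_general n φ hφ0 hφ1
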